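/- Let p ∈ ℕ, λ > 0, Σ and Σ̂ two p×p real symmetric positive semidefinite matrices, Σ_λ := Σ + λ·I_p and Σ̂_λ := Σ̂ + λ·I_p, and v ∈ ℝ^p. If ‖Σ_λ^{−1/2}(Σ − Σ̂)Σ_λ^{−1/2}‖_{op} ≤ 1/2, then ‖Σ_λ^{1/2} v‖² ≤ 2‖Σ̂_λ^{1/2} v‖²; that is, the regularised out-of-sample prediction loss is at most twice the regularised in-sample prediction loss. -/

import Mathlib

open Matrix

/-- Squared Euclidean norm on `Fin p → ℝ`. -/
noncomputable def sqnorm {p : ℕ} (v : Fin p → ℝ) : ℝ := ∑ i, (v i) ^ 2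

/-- The positive semidefinite square root of a positive semidefinite matrix
(removed from Mathlib; restored with its old definition). -/
noncomputable def Matrix.PosSemidef.sqrt {n : Type*} [Fintype n] [DecidableEq n]
    {A : Matrix n n ℝ} (hA : A.PosSemidef) : Matrix n n ℝ :=
  hA.1.eigenvectorUnitary.1 * diagonal ((√·) ∘ hA.1.eigenvalues) *
  (star hA.1.eigenvectorUnitary : Matrix n n ℝ)

/-- The spectral (ℓ²-operator) norm of a real matrix. -/
noncomputable def opNorm {p : ℕ} (M : Matrix (Fin p) (Fin p) ℝ) : ℝ :=
  ‖Matrix.toEuclideanCLM (𝕜 := ℝ) M‖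

/-!
Write `w = Σ_λ^{1/2} v` and `M = Σ_λ^{-1/2}(Σ - Σ̂)Σ_λ^{-1/2}`. Since the square roots square to
`Σ_λ` and `Σ̂_λ`, and the `λ I` terms cancel,
`‖Σ_λ^{1/2} v‖² - ‖Σ̂_λ^{1/2} v‖² = vᵀ(Σ - Σ̂)v = wᵀ M w ≤ ‖M‖ ‖w‖² ≤ ‖w‖² / 2`,
which rearranges to `‖w‖² ≤ 2 ‖Σ̂_λ^{1/2} v‖²`.
-/

lemma Matrix.IsSymm.mulVec_dotProduct {n R : Type*} [Fintype n] [CommSemiring R]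
    {S : Matrix n n R} (hS : S.IsSymm) (x y : n → R) : (S *ᵥ x) ⬝ᵥ y = x ⬝ᵥ (S *ᵥ y) := by
  rw [dotProduct_mulVec, ← vecMul_transpose, hS.eq]

namespace Matrix.PosSemidef

variable {n : Type*} [Fintype n] [DecidableEq n] {A : Matrix n n ℝ}

lemma sqrt_isSymm (hA : A.PosSemidef) : hA.sqrt.IsSymm := by
  rw [IsSymm, ← conjTranspose_eq_transpose_of_trivial]
  simp only [sqrt, conjTranspose_mul, conjTranspose_conjTranspose, diagonal_conjTranspose,
    star_eq_conjTranspose, Matrix.mul_assoc]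
  congr 2

lemma sqrt_mul_sqrt (hA : A.PosSemidef) : hA.sqrt * hA.sqrt = A := by
  have hU : (star hA.1.eigenvectorUnitary : Matrix n n ℝ) * hA.1.eigenvectorUnitary.1 = 1 :=
    Unitary.coe_star_mul_self _
  have hD : diagonal ((√·) ∘ hA.1.eigenvalues) * diagonal ((√·) ∘ hA.1.eigenvalues)
      = diagonal (RCLike.ofReal ∘ hA.1.eigenvalues) := by
    rw [diagonal_mul_diagonal]
    congr 1
    funext i
    simp [Real.mul_self_sqrt (hA.eigenvalues_nonneg i)]
  conv_rhs => rw [hA.1.spectral_theorem, Unitary.conjStarAlgAut_apply]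
  simp only [sqrt, Matrix.mul_assoc]
  rw [← Matrix.mul_assoc (star _ : Matrix n n ℝ), hU, Matrix.one_mul,
    ← Matrix.mul_assoc (diagonal _), hD]

lemma isUnit_det_sqrt (hA : A.PosSemidef) (hdet : IsUnit A.det) : IsUnit hA.sqrt.det := by
  rw [← hA.sqrt_mul_sqrt, det_mul] at hdet
  exact isUnit_of_mul_isUnit_left hdet

end Matrix.PosSemidef

lemma sqnorm_eq_dotProduct {p : ℕ} (v : Fin p → ℝ) : sqnorm v = v ⬝ᵥ v := by
  simp [sqnorm, dotProduct, sq]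

lemma sqnorm_nonneg {p : ℕ} (v : Fin p → ℝ) : 0 ≤ sqnorm v :=
  Finset.sum_nonneg fun _ _ => sq_nonneg _

lemma sqnorm_sqrt_mulVec {p : ℕ} {A : Matrix (Fin p) (Fin p) ℝ} (hA : A.PosSemidef)
    (v : Fin p → ℝ) : sqnorm (hA.sqrt *ᵥ v) = v ⬝ᵥ (A *ᵥ v) := by
  rw [sqnorm_eq_dotProduct, hA.sqrt_isSymm.mulVec_dotProduct, mulVec_mulVec, hA.sqrt_mul_sqrt]

lemma dotProduct_mulVec_le_opNorm_mul_sqnorm {p : ℕ} (M : Matrix (Fin p) (Fin p) ℝ)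
    (w : Fin p → ℝ) : w ⬝ᵥ (M *ᵥ w) ≤ opNorm M * sqnorm w := by
  set x : EuclideanSpace ℝ (Fin p) := WithLp.toLp 2 w
  have hx : ‖x‖ ^ 2 = sqnorm w := by
    rw [← real_inner_self_eq_norm_sq, sqnorm_eq_dotProduct]
    rfl
  calc w ⬝ᵥ (M *ᵥ w) = inner ℝ x (toEuclideanCLM (𝕜 := ℝ) M x) := (inner_toEuclideanCLM M x x).symm
    _ ≤ ‖x‖ * ‖toEuclideanCLM (𝕜 := ℝ) M x‖ := real_inner_le_norm _ _
    _ ≤ ‖x‖ * (opNorm M * ‖x‖) := by gcongr; exact (toEuclideanCLM (𝕜 := ℝ) M).le_opNorm x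
    _ = opNorm M * sqnorm w := by rw [← hx]; ring

lemma dotProduct_mulVec_eq_conj {n R : Type*} [Fintype n] [DecidableEq n] [CommRing R]
    {S : Matrix n n R} (hS : S.IsSymm) (hdet : IsUnit S.det) (D : Matrix n n R) (v : n → R) :
    v ⬝ᵥ (D *ᵥ v) = (S *ᵥ v) ⬝ᵥ ((S⁻¹ * D * S⁻¹) *ᵥ (S *ᵥ v)) := by
  rw [mulVec_mulVec, Matrix.mul_assoc, nonsing_inv_mul S hdet, Matrix.mul_one, hS.mulVec_dotProduct,
    mulVec_mulVec, ← Matrix.mul_assoc, mul_nonsing_inv S hdet, Matrix.one_mul]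

theorem out_sample_le_two_in_sample_general
    (p : ℕ) (lam : ℝ) (hlam : 0 < lam)
    (Sig Sighat : Matrix (Fin p) (Fin p) ℝ)
    (hSig : Sig.PosSemidef)
    (Sigl Sighatl : Matrix (Fin p) (Fin p) ℝ)
    (hSigl_def : Sigl = Sig + lam • 1) (hSighatl_def : Sighatl = Sighat + lam • 1)
    (hSigl : Sigl.PosSemidef) (hSighatl : Sighatl.PosSemidef)
    (v : Fin p → ℝ)
    (hop : opNorm ((hSigl.sqrt)⁻¹ * (Sig - Sighat) * (hSigl.sqrt)⁻¹) ≤ 1 / 2) :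
    sqnorm (hSigl.sqrt *ᵥ v) ≤ 2 * sqnorm (hSighatl.sqrt *ᵥ v) := by
  have hSigl_pd : Sigl.PosDef := hSigl_def ▸ PosDef.posSemidef_add hSig (PosDef.one.smul hlam)
  have hdet : IsUnit hSigl.sqrt.det := hSigl.isUnit_det_sqrt hSigl_pd.det_pos.ne'.isUnit
  have hdiff : Sigl - Sighatl = Sig - Sighat := by rw [hSigl_def, hSighatl_def]; abel
  set w := hSigl.sqrt *ᵥ v
  have hgap : sqnorm w - sqnorm (hSighatl.sqrt *ᵥ v)
      = w ⬝ᵥ (((hSigl.sqrt)⁻¹ * (Sig - Sighat) * (hSigl.sqrt)⁻¹) *ᵥ w) := by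
    rw [sqnorm_sqrt_mulVec, sqnorm_sqrt_mulVec, ← dotProduct_sub, ← sub_mulVec, hdiff,
      dotProduct_mulVec_eq_conj hSigl.sqrt_isSymm hdet]
  have hquad : w ⬝ᵥ (((hSigl.sqrt)⁻¹ * (Sig - Sighat) * (hSigl.sqrt)⁻¹) *ᵥ w) ≤ 1 / 2 * sqnorm w :=
    (dotProduct_mulVec_le_opNorm_mul_sqnorm _ w).trans
      (mul_le_mul_of_nonneg_right hop (sqnorm_nonneg w))
  linarith [sqnorm_nonneg (hSighatl.sqrt *ᵥ v)]

/-- if `‖Σ_λ^{−1/2}(Σ − Σ̂)Σ_λ^{−1/2}‖ ≤ 1/2`, then the regularised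
out-of-sample prediction loss is at most twice the regularised in-sample prediction loss. -/
theorem out_sample_le_two_in_sample
    (p : ℕ) (lam : ℝ) (hlam : 0 < lam)
    (Sig Sighat : Matrix (Fin p) (Fin p) ℝ)
    (hSig : Sig.PosSemidef) (hSighat : Sighat.PosSemidef)
    (Sigl Sighatl : Matrix (Fin p) (Fin p) ℝ)
    (hSigl_def : Sigl = Sig + lam • 1) (hSighatl_def : Sighatl = Sighat + lam • 1)
    (hSigl : Sigl.PosSemidef) (hSighatl : Sighatl.PosSemidef)
    (v : Fin p → ℝ)
    (hop : opNorm ((hSigl.sqrt)⁻¹ * (Sig - Sighat) * (hSigl.sqrt)⁻¹) ≤ 1 / 2) :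
    sqnorm (hSigl.sqrt *ᵥ v) ≤ 2 * sqnorm (hSighatl.sqrt *ᵥ v) :=
  out_sample_le_two_in_sample_general p lam hlam Sig Sighat hSig Sigl Sighatl hSigl_def hSighatl_def
    hSigl hSighatl v hop
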